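/- arXiv:cs/0607013 — 12 statements merged into one kernel-verified Lean document; each statement's English description precedes it below -/
import Mathlib

section
/- For all preference relations ≻ and ≻₀ on the same set of tuples, the Pareto composition is contained in the prioritized composition, which is contained in the union: ≻₀⊗≻ ⊆ ≻₀▷≻ ⊆ ≻₀∪≻. Moreover, if ≻₀ and ≻ are 0-compatible, then all three compositions coincide: ≻₀⊗≻ = ≻₀▷≻ = ≻₀∪≻. -/
/-- Union composition of preference relations: `x (r0 ∪ r) y` iff `x r0 y ∨ x r y`. -/
def PrefUnion {α : Type*} (r0 r : α → α → Prop) : α → α → Prop :=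
  fun x y => r0 x y ∨ r x y

/-- Prioritized composition: `x (r0 ▷ r) y` iff `x r0 y ∨ (¬ y r0 x ∧ x r y)`. -/
def PrefPrior {α : Type*} (r0 r : α → α → Prop) : α → α → Prop :=
  fun x y => r0 x y ∨ (¬ r0 y x ∧ r x y)

/-- Pareto composition: `x (r0 ⊗ r) y` iff `(x r0 y ∧ ¬ y r x) ∨ (x r y ∧ ¬ y r0 x)`. -/
def PrefPareto {α : Type*} (r0 r : α → α → Prop) : α → α → Prop :=
  fun x y => (r0 x y ∧ ¬ r y x) ∨ (r x y ∧ ¬ r0 y x)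

/-- `r` and `r0` are 0-compatible: no pair `(t1,t2)` with `t1 r0 t2` and `t2 r t1`. -/
def Compat0 {α : Type*} (r r0 : α → α → Prop) : Prop :=
  ¬ ∃ t1 t2, r0 t1 t2 ∧ r t2 t1

/-- Strict partial order: irreflexive and transitive. -/
def IsSPO {α : Type*} (r : α → α → Prop) : Prop :=
  (∀ x, ¬ r x x) ∧ (∀ x y z, r x y → r y z → r x z)

/-- Weak order: a negatively transitive SPO. -/
def IsWO {α : Type*} (r : α → α → Prop) : Prop :=
  IsSPO r ∧ (∀ x y z, ¬ r x y → ¬ r y z → ¬ r x z)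

/-- Interval order: an SPO such that `x r y ∧ z r w → x r w ∨ z r y`. -/
def IsIO {α : Type*} (r : α → α → Prop) : Prop :=
  IsSPO r ∧ (∀ x y z w, r x y → r z w → r x w ∨ r z y)

/-- Transitive closure of a preference relation. -/
def PrefTC {α : Type*} (r : α → α → Prop) : α → α → Prop :=
  Relation.TransGen r

/-- The winnow operator: the most preferred tuples of `s` w.r.t. `r`. -/
def Winnow {α : Type*} (r : α → α → Prop) (s : Set α) : Set α :=
  {t ∈ s | ¬ ∃ t' ∈ s, r t' t}

/-- Restriction of a preference relation to an instance `s`. -/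
def Restrict {α : Type*} (r : α → α → Prop) (s : Set α) : α → α → Prop :=
  fun x y => r x y ∧ x ∈ s ∧ y ∈ s

/-- Pareto ⊆ prioritized ⊆ union; under 0-compatibility all three coincide. -/
theorem stmt0 {α : Type*} (r r0 : α → α → Prop) :
    ((∀ x y, PrefPareto r0 r x y → PrefPrior r0 r x y) ∧
     (∀ x y, PrefPrior r0 r x y → PrefUnion r0 r x y)) ∧
    (Compat0 r r0 →
      PrefPareto r0 r = PrefPrior r0 r ∧ PrefPrior r0 r = PrefUnion r0 r) := by
  constructor
  · constructor
    · rintro x y (⟨h0, hn⟩ | ⟨h, hn0⟩)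
      · exact Or.inl h0
      · exact Or.inr ⟨hn0, h⟩
    · rintro x y (h0 | ⟨_, h⟩)
      · exact Or.inl h0
      · exact Or.inr h
  · intro hc
    constructor
    · funext x y
      ext
      constructor
      · rintro (⟨h0, _⟩ | ⟨h, hn0⟩)
        · exact Or.inl h0
        · exact Or.inr ⟨hn0, h⟩
      · rintro (h0 | ⟨hn0, h⟩)
        · exact Or.inl ⟨h0, fun h' => hc ⟨x, y, h0, h'⟩⟩
        · exact Or.inr ⟨h, fun h' => hc ⟨y, x, h', h⟩⟩
    · funext x y
      ext
      constructor
      · rintro (h0 | ⟨_, h⟩)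
        · exact Or.inl h0
        · exact Or.inr h
      · rintro (h0 | h)
        · exact Or.inl h0
        · exact Or.inr ⟨fun h' => hc ⟨y, x, h', h⟩, h⟩
end

section
/- Let ≻ and ≻₀ be 0-compatible preference relations such that one of them is an interval order (IO) and the other is a strict partial order (SPO). Then for each θ ∈ {∪, ▷, ⊗}, the transitive closure TC(≻₀ θ ≻) is a strict partial order. Moreover, if the one that is an IO is in fact a weak order (WO), then TC(≻₀ θ ≻) = ≻₀ θ ≻. -/
/-!
Under 0-compatibility the prioritized and Pareto compositions both coincide with the union, so
only `p ∪ q` with `p` an interval order and `q` a strict partial order has to be studied. A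
`p ∪ q`-cycle would collapse to `q^= p q^=`, which compatibility forbids. If `p` is a weak order,
`p x y` forces `p x z ∨ p z y` for every `z`, so even a mixed two-step path `p ∪ q` is a single
step.
-/

section Preference

open Relation

variable {α : Type*}

lemma Compat0.symm {r r0 : α → α → Prop} (hc : Compat0 r r0) : Compat0 r0 r :=
  fun ⟨a, b, hab, hba⟩ => hc ⟨b, a, hba, hab⟩

lemma prefUnion_comm (r0 r : α → α → Prop) : PrefUnion r0 r = PrefUnion r r0 := by
  funext x y
  exact propext or_comm

section Compat

variable {r r0 : α → α → Prop}

lemma prefPrior_eq_prefUnion (hc : Compat0 r r0) : PrefPrior r0 r = PrefUnion r0 r := by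
  funext x y
  exact propext ⟨Or.imp_right And.right,
    Or.imp_right fun hxy => ⟨fun hyx => hc ⟨y, x, hyx, hxy⟩, hxy⟩⟩

lemma prefPareto_eq_prefUnion (hc : Compat0 r r0) : PrefPareto r0 r = PrefUnion r0 r := by
  funext x y
  exact propext ⟨Or.imp And.left And.left,
    Or.imp (fun hxy => ⟨hxy, fun hyx => hc ⟨x, y, hxy, hyx⟩⟩)
      fun hxy => ⟨hxy, fun hyx => hc ⟨y, x, hyx, hxy⟩⟩⟩

end Compat

section IntervalOrder

variable {p q : α → α → Prop}

/-- Consecutive `p`-steps merge by the interval-order axiom, its other alternative being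
excluded by compatibility. -/
lemma prefTC_prefUnion_cases (hp : IsIO p) (hq : IsSPO q) (hc : Compat0 q p) {x y : α}
    (hxy : PrefTC (PrefUnion p q) x y) :
    q x y ∨ ∃ a b, ReflGen q x a ∧ p a b ∧ ReflGen q b y := by
  have q_of_reflGen {a b c : α} (hab : ReflGen q a b) (hbc : q b c) : q a c := by
    cases hab with
    | refl => exact hbc
    | single hab => exact hq.2 _ _ _ hab hbc
  induction hxy with
  | single hxy =>
    rcases hxy with hxy | hxy
    · exact Or.inr ⟨x, _, .refl, hxy, .refl⟩
    · exact Or.inl hxy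
  | @tail b z _ hbz ih =>
    rcases hbz with hbz | hbz
    · rcases ih with hxb | ⟨a, c, hxa, hac, hcb⟩
      · exact Or.inr ⟨b, z, .single hxb, hbz, .refl⟩
      · have haz : p a z := by
          cases hcb with
          | refl => exact hp.1.2 _ _ _ hac hbz
          | single hcb =>
            exact (hp.2 _ _ _ _ hac hbz).resolve_right fun hbc => hc ⟨b, c, hbc, hcb⟩
        exact Or.inr ⟨a, z, hxa, haz, .refl⟩
    · rcases ih with hxb | ⟨a, c, hxa, hac, hcb⟩
      · exact Or.inl (hq.2 _ _ _ hxb hbz)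
      · exact Or.inr ⟨a, c, hxa, hac, .single (q_of_reflGen hcb hbz)⟩

lemma isSPO_prefTC_prefUnion (hp : IsIO p) (hq : IsSPO q) (hc : Compat0 q p) :
    IsSPO (PrefTC (PrefUnion p q)) := by
  refine ⟨fun x hxx => ?_, fun _ _ _ => TransGen.trans⟩
  rcases prefTC_prefUnion_cases hp hq hc hxx with hxx | ⟨a, b, hxa, hab, hbx⟩
  · exact hq.1 x hxx
  · cases hxa with
    | refl =>
      cases hbx with
      | refl => exact hp.1.1 x hab
      | single hbx => exact hc ⟨x, b, hab, hbx⟩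
    | single hxa =>
      cases hbx with
      | refl => exact hc ⟨a, x, hab, hxa⟩
      | single hbx => exact hc ⟨a, b, hab, hq.2 _ _ _ hbx hxa⟩

lemma IsWO.rel_or_rel {x y : α} (hp : IsWO p) (hxy : p x y) (z : α) : p x z ∨ p z y := by
  by_contra! h
  exact hp.2 x z y h.1 h.2 hxy

lemma prefUnion_isTrans (hp : IsWO p) (hq : IsSPO q) (hc : Compat0 q p) :
    IsTrans α (PrefUnion p q) := by
  refine ⟨?_⟩
  rintro x y z (hxy | hxy) (hyz | hyz)
  · exact Or.inl (hp.1.2 _ _ _ hxy hyz)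
  · exact Or.inl ((hp.rel_or_rel hxy z).resolve_right fun hzy => hc ⟨z, y, hzy, hyz⟩)
  · exact Or.inl ((hp.rel_or_rel hyz x).resolve_left fun hyx => hc ⟨y, x, hyx, hxy⟩)
  · exact Or.inr (hq.2 _ _ _ hxy hyz)

lemma prefTC_prefUnion_eq (hp : IsWO p) (hq : IsSPO q) (hc : Compat0 q p) :
    PrefTC (PrefUnion p q) = PrefUnion p q :=
  have := prefUnion_isTrans hp hq hc
  transGen_eq_self

end IntervalOrder

end Preference

/-- For 0-compatible relations, one an IO and the other an SPO, the transitive closure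
of each composition is an SPO; if the IO is a WO, the transitive closure is superfluous. -/
theorem stmt1 {α : Type*} (r r0 : α → α → Prop)
    (hc : Compat0 r r0)
    (h : (IsIO r0 ∧ IsSPO r) ∨ (IsIO r ∧ IsSPO r0)) :
    (IsSPO (PrefTC (PrefUnion r0 r)) ∧ IsSPO (PrefTC (PrefPrior r0 r)) ∧
      IsSPO (PrefTC (PrefPareto r0 r))) ∧
    (((IsWO r0 ∧ IsSPO r) ∨ (IsWO r ∧ IsSPO r0)) →
      (PrefTC (PrefUnion r0 r) = PrefUnion r0 r ∧
       PrefTC (PrefPrior r0 r) = PrefPrior r0 r ∧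
       PrefTC (PrefPareto r0 r) = PrefPareto r0 r)) := by
  rw [prefPrior_eq_prefUnion hc, prefPareto_eq_prefUnion hc]
  have hspo : IsSPO (PrefTC (PrefUnion r0 r)) := by
    rcases h with ⟨hio, hspo⟩ | ⟨hio, hspo⟩
    · exact isSPO_prefTC_prefUnion hio hspo hc
    · rw [prefUnion_comm]
      exact isSPO_prefTC_prefUnion hio hspo hc.symm
  refine ⟨⟨hspo, hspo, hspo⟩, fun hwo => ?_⟩
  have heq : PrefTC (PrefUnion r0 r) = PrefUnion r0 r := by
    rcases hwo with ⟨hwo, hspo⟩ | ⟨hwo, hspo⟩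
    · exact prefTC_prefUnion_eq hwo hspo hc
    · rw [prefUnion_comm]
      exact prefTC_prefUnion_eq hwo hspo hc.symm
  exact ⟨heq, heq, heq⟩
end

section
/- Let ≻ and ≻₀ be preference relations such that ≻₀ is an interval order (IO), ≻ is a strict partial order (SPO), and ≻ is 1-compatible with ≻₀. Then the transitive closure TC(≻₀ ▷ ≻) of the prioritized composition is a strict partial order. -/
/-- A 1-conflict between `r` and `r0`: `t1 r0 t2` together with a chain
`t2 r s1 r ⋯ r sk r t1` (k ≥ 1) such that
`¬ t1 r0 sk`, `¬ sk r0 s(k-1)`, …, `¬ s1 r0 t2`. -/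
def OneConflict {α : Type*} (r r0 : α → α → Prop) (t1 t2 : α) : Prop :=
  r0 t1 t2 ∧ ∃ l : List α, l ≠ [] ∧
    List.Chain r t2 (l ++ [t1]) ∧
    List.Chain (fun a b => ¬ r0 a b) t1 (l.reverse ++ [t2])

/-- `r` is 1-compatible with `r0`: there is no 1-conflict between them. -/
def Compat1 {α : Type*} (r r0 : α → α → Prop) : Prop :=
  ¬ ∃ t1 t2, OneConflict r r0 t1 t2

/-- If `r0` is an IO, `r` is an SPO and `r` is 1-compatible with `r0`, then
`PrefTC(r0 ▷ r)` is an SPO. -/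
theorem stmt2 {α : Type*} (r r0 : α → α → Prop)
    (h0 : IsIO r0) (h : IsSPO r) (hc : Compat1 r r0) :
    IsSPO (PrefTC (PrefPrior r0 r)) := by
  obtain ⟨⟨h0i, h0t⟩, hio⟩ := h0
  obtain ⟨hri, hrt⟩ := h
  -- `Pe x y` is an "r-edge" of the prioritized composition
  set Pe : α → α → Prop := fun x y => ¬ r0 y x ∧ r x y with hPe
  -- merging two consecutive r-edges (uses 1-compatibility with k = 1)
  have merge : ∀ x y z, Pe x y → Pe y z → Pe x z := by
    rintro x y z ⟨hyx, hxy⟩ ⟨hzy, hyz⟩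
    refine ⟨fun hzx => ?_, hrt _ _ _ hxy hyz⟩
    exact hc ⟨z, x, hzx, [y], by simp,
      List.Chain.cons hxy (List.Chain.cons hyz List.Chain.nil),
      List.Chain.cons hzy (List.Chain.cons hyx List.Chain.nil)⟩
  -- normal forms for paths
  set Q : α → α → Prop := fun x y => r0 x y ∨ Pe x y ∨ (∃ a, r0 x a ∧ Pe a y) ∨
      (∃ a, Pe x a ∧ r0 a y) ∨ (∃ a b, Pe x a ∧ r0 a b ∧ Pe b y) with hQ
  -- extending a normal form by one edge yields a normal form
  have step : ∀ x y z, Q x y → PrefPrior r0 r y z → Q x z := by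
    rintro x y z hq (h0e | ⟨hn, hr⟩)
    · -- new edge is an r0-edge
      rcases hq with h1 | h1 | ⟨a, h1, h2⟩ | ⟨a, h1, h2⟩ | ⟨a, b, h1, h2, h3⟩
      · exact Or.inl (h0t _ _ _ h1 h0e)
      · exact Or.inr (Or.inr (Or.inr (Or.inl ⟨y, h1, h0e⟩)))
      · -- pattern 0,1,0 : use the interval order axiom
        rcases hio _ _ _ _ h1 h0e with h | h
        · exact Or.inl h
        · exact absurd h h2.1
      · exact Or.inr (Or.inr (Or.inr (Or.inl ⟨a, h1, h0t _ _ _ h2 h0e⟩)))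
      · -- pattern 1,0,1,0 : interval order on the last 0,1,0
        rcases hio _ _ _ _ h2 h0e with hh | hh
        · exact Or.inr (Or.inr (Or.inr (Or.inl ⟨a, h1, hh⟩)))
        · exact absurd hh h3.1
    · -- new edge is an r-edge
      have hpe : Pe y z := ⟨hn, hr⟩
      rcases hq with h1 | h1 | ⟨a, h1, h2⟩ | ⟨a, h1, h2⟩ | ⟨a, b, h1, h2, h3⟩
      · exact Or.inr (Or.inr (Or.inl ⟨y, h1, hpe⟩))
      · exact Or.inr (Or.inl (merge _ _ _ h1 hpe))
      · exact Or.inr (Or.inr (Or.inl ⟨a, h1, merge _ _ _ h2 hpe⟩))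
      · exact Or.inr (Or.inr (Or.inr (Or.inr ⟨a, y, h1, h2, hpe⟩)))
      · exact Or.inr (Or.inr (Or.inr (Or.inr ⟨a, b, h1, h2, merge _ _ _ h3 hpe⟩)))
  have key : ∀ x y, PrefTC (PrefPrior r0 r) x y → Q x y := by
    intro x y h
    induction h with
    | single h1 =>
      rcases h1 with h1 | ⟨hn, hr⟩
      · exact Or.inl h1
      · exact Or.inr (Or.inl ⟨hn, hr⟩)
    | tail h1 h2 ih => exact step _ _ _ ih h2
  constructor
  · intro x hx
    rcases key _ _ hx with h1 | h1 | ⟨a, h1, h2⟩ | ⟨a, h1, h2⟩ | ⟨a, b, h1, h2, h3⟩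
    · exact h0i _ h1
    · exact hri _ h1.2
    · exact h2.1 h1
    · exact h1.1 h2
    · -- 1-conflict with k = 1 : chain b r x r a, r0 a b
      exact hc ⟨a, b, h2, [x], by simp,
        List.Chain.cons h3.2 (List.Chain.cons h1.2 List.Chain.nil),
        List.Chain.cons h1.1 (List.Chain.cons h3.1 List.Chain.nil)⟩
  · intro x y z hxy hyz
    exact hxy.trans hyz
end

section
/- For all preference relations ≻₀ and ≻ such that ≻₀ is a weak order (WO) and ≻ is a strict partial order (SPO), the prioritized composition ≻₀ ▷ ≻ is a strict partial order. -/
/-- If `r0` is a WO and `r` an SPO, then `r0 ▷ r` is an SPO. -/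
theorem stmt4 {α : Type*} (r r0 : α → α → Prop)
    (h0 : IsWO r0) (h : IsSPO r) :
    IsSPO (PrefPrior r0 r) := by
  obtain ⟨⟨hirr0, htr0⟩, hnt0⟩ := h0
  obtain ⟨hirr, htr⟩ := h
  constructor
  · intro x hx
    rcases hx with h1 | ⟨_, h2⟩
    · exact hirr0 x h1
    · exact hirr x h2
  · intro x y z hxy hyz
    rcases hxy with h1 | ⟨h1n, h1r⟩ <;> rcases hyz with h2 | ⟨h2n, h2r⟩
    · exact Or.inl (htr0 x y z h1 h2)
    · -- x r0 y, ¬ z r0 y, y r z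
      by_cases hx0 : r0 x z
      · exact Or.inl hx0
      · exact Or.inl (absurd h1 (hnt0 x z y hx0 (fun hzy => h2n hzy)))
    · -- ¬ y r0 x, x r y, y r0 z
      by_cases hx0 : r0 x z
      · exact Or.inl hx0
      · exact absurd h2 (hnt0 y x z h1n hx0)
    · exact Or.inr ⟨hnt0 z y x h2n h1n, htr x y z h1r h2r⟩
end

section
/- For all preference relations ≻₀ and ≻ such that both are weak orders (WOs), the Pareto composition ≻₀ ⊗ ≻ is a strict partial order. -/
/-- If `r0` and `r` are both WOs, then the Pareto composition `r0 ⊗ r` is an SPO. -/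
theorem stmt5 {α : Type*} (r r0 : α → α → Prop)
    (h0 : IsWO r0) (h : IsWO r) :
    IsSPO (PrefPareto r0 r) := by
  obtain ⟨⟨hirr0, htr0⟩, hnt0⟩ := h0
  obtain ⟨⟨hirr, htr⟩, hnt⟩ := h
  constructor
  · intro x hx
    rcases hx with ⟨h1, _⟩ | ⟨h1, _⟩
    · exact hirr0 x h1
    · exact hirr x h1
  · intro x y z hxy hyz
    rcases hxy with ⟨a1, a2⟩ | ⟨a1, a2⟩ <;> rcases hyz with ⟨b1, b2⟩ | ⟨b1, b2⟩
    · exact Or.inl ⟨htr0 x y z a1 b1, hnt z y x b2 a2⟩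
    · refine Or.inl ⟨?_, ?_⟩
      · by_contra hc
        exact a1 |> hnt0 x z y hc b2
      · intro hc
        exact a2 (htr y z x b1 hc)
    · refine Or.inr ⟨?_, ?_⟩
      · by_contra hc
        exact a1 |> hnt x z y hc b2
      · intro hc
        exact a2 (htr0 y z x b1 hc)
    · exact Or.inr ⟨htr x y z a1 b1, hnt0 z y x b2 a2⟩
end

section
/- For all 0-compatible weak order (WO) preference relations ≻ and ≻₀, both the union ≻∪≻₀ and the Pareto composition ≻⊗≻₀ are weak orders. -/
/-- For 0-compatible WOs `r` and `r0`, both `r ∪ r0` and `r ⊗ r0` are WOs. -/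
theorem stmt6 {α : Type*} (r r0 : α → α → Prop)
    (h : IsWO r) (h0 : IsWO r0) (hc : Compat0 r r0) :
    IsWO (PrefUnion r r0) ∧ IsWO (PrefPareto r r0) := by
  obtain ⟨⟨hirr, htr⟩, hnt⟩ := h
  obtain ⟨⟨hirr0, htr0⟩, hnt0⟩ := h0
  have hcc : ∀ x y, r0 x y → ¬ r y x := by
    intro x y hxy hyx; exact hc ⟨x, y, hxy, hyx⟩
  -- union is a WO
  have hU : IsWO (PrefUnion r r0) := by
    refine ⟨⟨?_, ?_⟩, ?_⟩
    · intro x hx; rcases hx with hx | hx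
      · exact hirr x hx
      · exact hirr0 x hx
    · intro x y z hxy hyz
      rcases hxy with hxy | hxy <;> rcases hyz with hyz | hyz
      · exact Or.inl (htr x y z hxy hyz)
      · by_cases hxz : r x z
        · exact Or.inl hxz
        · exfalso
          have hzy : r z y := by
            by_contra hzy; exact hnt x z y hxz hzy hxy
          exact hcc y z hyz hzy
      · by_cases hxz : r0 x z
        · exact Or.inr hxz
        · exfalso
          have hzy : r0 z y := by
            by_contra hzy; exact hnt0 x z y hxz hzy hxy
          exact hcc z y hzy hyz
      · exact Or.inr (htr0 x y z hxy hyz)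
    · intro x y z hxy hyz hxz
      rcases hxz with hxz | hxz
      · exact hnt x y z (fun hh => hxy (Or.inl hh)) (fun hh => hyz (Or.inl hh)) hxz
      · exact hnt0 x y z (fun hh => hxy (Or.inr hh)) (fun hh => hyz (Or.inr hh)) hxz
  have heq : ∀ x y, PrefPareto r r0 x y ↔ PrefUnion r r0 x y := by
    intro x y
    constructor
    · rintro (⟨hh, _⟩ | ⟨hh, _⟩)
      · exact Or.inl hh
      · exact Or.inr hh
    · rintro (hh | hh)
      · exact Or.inl ⟨hh, fun hr => hcc y x hr hh⟩
      · exact Or.inr ⟨hh, hcc x y hh⟩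
  refine ⟨hU, ?_⟩
  have : PrefPareto r r0 = PrefUnion r r0 := by
    funext x y; exact propext (heq x y)
  rw [this]; exact hU
end

section
/- For all weak order (WO) preference relations ≻ and ≻₀, the prioritized composition ≻₀ ▷ ≻ is a weak order. -/
/-- For WOs `r` and `r0`, the prioritized composition `r0 ▷ r` is a WO. -/
theorem stmt7 {α : Type*} (r r0 : α → α → Prop)
    (h : IsWO r) (h0 : IsWO r0) :
    IsWO (PrefPrior r0 r) := by
  obtain ⟨⟨hirr, htr⟩, hnt⟩ := h
  obtain ⟨⟨hirr0, htr0⟩, hnt0⟩ := h0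
  refine ⟨⟨?_, ?_⟩, ?_⟩
  · rintro x (hx | ⟨-, hx⟩)
    · exact hirr0 x hx
    · exact hirr x hx
  · rintro x y z (hxy | ⟨hyx, hxy⟩) (hyz | ⟨hzy, hyz⟩)
    · exact Or.inl (htr0 _ _ _ hxy hyz)
    · by_cases hxz : r0 x z
      · exact Or.inl hxz
      · exact absurd hxy (hnt0 _ _ _ hxz hzy)
    · by_cases hxz : r0 x z
      · exact Or.inl hxz
      · exact absurd hyz (hnt0 _ _ _ hyx hxz)
    · refine Or.inr ⟨fun hzx => ?_, htr _ _ _ hxy hyz⟩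
      exact hnt0 _ _ _ hzy hyx hzx
  · rintro x y z hxy hyz (hxz | ⟨hzx, hxz⟩)
    · exact hnt0 _ _ _ (fun a => hxy (Or.inl a)) (fun a => hyz (Or.inl a)) hxz
    · rcases not_or.mp hxy with ⟨hxy0, hxy1⟩
      rcases not_or.mp hyz with ⟨hyz0, hyz1⟩
      rcases not_and_or.mp hxy1 with hyx | hrxy
      · exact hnt0 _ _ _ hyz0 hzx (not_not.mp hyx)
      rcases not_and_or.mp hyz1 with hzy | hryz
      · exact hnt0 _ _ _ hzx hxy0 (not_not.mp hzy)
      · exact hnt _ _ _ hrxy hryz hxz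
end

section
/- Assume ≻ and ≻₀ are weak order (WO) preference relations that are 0-compatible, ≻ is represented by a real-valued function u, and ≻₀ is represented by a real-valued function u₀. Let a and b be arbitrary positive real numbers and c a real number, and define u'(x) = a·u(x) + b·u₀(x) + c. Then for each θ ∈ {∪, ▷, ⊗}, the composition ≻₀ θ ≻ is a weak order preference relation that is represented by u'. -/
/-- `u` represents `r` iff `t1 r t2 ↔ u t1 > u t2`. -/
def Represents {α : Type*} (u : α → ℝ) (r : α → α → Prop) : Prop :=
  ∀ t1 t2, r t1 t2 ↔ u t1 > u t2


lemma repr_WO {α : Type*} {v : α → ℝ} {q : α → α → Prop}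
    (h : Represents v q) : IsWO q := by
  refine ⟨⟨fun x hx => ?_, fun x y z hxy hyz => ?_⟩, fun x y z hxy hyz => ?_⟩
  · have := (h x x).mp hx; linarith
  · rw [h] at *; linarith
  · rw [h] at *; linarith

/-- For 0-compatible WOs represented by `u` and `u0`, each composition is a WO
represented by `x ↦ a·u(x) + b·u0(x) + c` for any positive `a`, `b`. -/
theorem stmt8 {α : Type*} (r r0 : α → α → Prop) (u u0 : α → ℝ)
    (hw : IsWO r) (hw0 : IsWO r0) (hc : Compat0 r r0)
    (hu : Represents u r) (hu0 : Represents u0 r0)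
    (a b c : ℝ) (ha : 0 < a) (hb : 0 < b) :
    (IsWO (PrefUnion r0 r) ∧
      Represents (fun x => a * u x + b * u0 x + c) (PrefUnion r0 r)) ∧
    (IsWO (PrefPrior r0 r) ∧
      Represents (fun x => a * u x + b * u0 x + c) (PrefPrior r0 r)) ∧
    (IsWO (PrefPareto r0 r) ∧
      Represents (fun x => a * u x + b * u0 x + c) (PrefPareto r0 r)) := by
  have key : ∀ x y, (r0 x y ∨ r x y) ↔
      a * u x + b * u0 x + c > a * u y + b * u0 y + c := by
    intro x y
    constructor
    · rintro (h0 | h1)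
      · have h0' := (hu0 x y).mp h0
        have huge : ¬ u y > u x := fun hxy => hc ⟨x, y, h0, (hu y x).mpr hxy⟩
        push_neg at huge
        nlinarith
      · have h1' := (hu x y).mp h1
        have huge : ¬ u0 y > u0 x := fun hxy => hc ⟨y, x, (hu0 y x).mpr hxy, h1⟩
        push_neg at huge
        nlinarith
    · intro h
      by_contra hcon
      push_neg at hcon
      have h1 : ¬ u0 x > u0 y := fun hh => hcon.1 ((hu0 x y).mpr hh)
      have h2 : ¬ u x > u y := fun hh => hcon.2 ((hu x y).mpr hh)
      push_neg at h1 h2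
      nlinarith
  have hun : Represents (fun x => a * u x + b * u0 x + c) (PrefUnion r0 r) := by
    intro x y; exact key x y
  have hpr : Represents (fun x => a * u x + b * u0 x + c) (PrefPrior r0 r) := by
    intro x y
    rw [← key x y]
    constructor
    · rintro (h | ⟨_, h⟩)
      exacts [Or.inl h, Or.inr h]
    · rintro (h | h)
      · exact Or.inl h
      · exact Or.inr ⟨fun h0 => hc ⟨y, x, h0, h⟩, h⟩
  have hpa : Represents (fun x => a * u x + b * u0 x + c) (PrefPareto r0 r) := by
    intro x y
    rw [← key x y]
    constructor
    · rintro (⟨h, _⟩ | ⟨h, _⟩)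
      exacts [Or.inl h, Or.inr h]
    · rintro (h | h)
      · exact Or.inl ⟨h, fun hr => hc ⟨x, y, h, hr⟩⟩
      · exact Or.inr ⟨h, fun h0 => hc ⟨y, x, h0, h⟩⟩
  exact ⟨⟨repr_WO hun, hun⟩, ⟨repr_WO hpr, hpr⟩, ⟨repr_WO hpa, hpa⟩⟩
end

section
/- Let θ ∈ {∪, ▷, ⊗}, let ≻ and ≻₀ be preference relations, and let r be an instance. Define ≻₁ = TC(≻₀ θ ≻), ≻₂ = (≻₁)|_r, ≻₃ = TC((≻₀ θ ≻)|_r), and ≻₄ = TC((≻₀|_r) θ (≻|_r)). Then ≻₄ = ≻₃ ⊆ ≻₂ ⊆ ≻₁. -/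
lemma tc_restrict_sub {α : Type*} (p : α → α → Prop) (s : Set α) :
    ∀ x y, PrefTC (Restrict p s) x y → Restrict (PrefTC p) s x y := by
  intro x y h
  induction h with
  | single h => exact ⟨Relation.TransGen.single h.1, h.2.1, h.2.2⟩
  | tail _ h ih => exact ⟨Relation.TransGen.tail ih.1 h.1, ih.2.1, h.2.2⟩

/-- For each composition operator θ: with `≻₁ = PrefTC(r0 θ r)`, `≻₂ = (≻₁)|_s`,
`≻₃ = PrefTC((r0 θ r)|_s)`, `≻₄ = PrefTC((r0|_s) θ (r|_s))`, we have `≻₄ = ≻₃ ⊆ ≻₂ ⊆ ≻₁`. -/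
theorem stmt14 {α : Type*} (r r0 : α → α → Prop) (s : Set α) :
    (PrefTC (PrefUnion (Restrict r0 s) (Restrict r s)) = PrefTC (Restrict (PrefUnion r0 r) s) ∧
     (∀ x y, PrefTC (Restrict (PrefUnion r0 r) s) x y → Restrict (PrefTC (PrefUnion r0 r)) s x y) ∧
     (∀ x y, Restrict (PrefTC (PrefUnion r0 r)) s x y → PrefTC (PrefUnion r0 r) x y)) ∧
    (PrefTC (PrefPrior (Restrict r0 s) (Restrict r s)) = PrefTC (Restrict (PrefPrior r0 r) s) ∧
     (∀ x y, PrefTC (Restrict (PrefPrior r0 r) s) x y → Restrict (PrefTC (PrefPrior r0 r)) s x y) ∧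
     (∀ x y, Restrict (PrefTC (PrefPrior r0 r)) s x y → PrefTC (PrefPrior r0 r) x y)) ∧
    (PrefTC (PrefPareto (Restrict r0 s) (Restrict r s)) = PrefTC (Restrict (PrefPareto r0 r) s) ∧
     (∀ x y, PrefTC (Restrict (PrefPareto r0 r) s) x y → Restrict (PrefTC (PrefPareto r0 r)) s x y) ∧
     (∀ x y, Restrict (PrefTC (PrefPareto r0 r)) s x y → PrefTC (PrefPareto r0 r) x y)) := by
  refine ⟨⟨?_, tc_restrict_sub _ _, fun x y h => h.1⟩,
          ⟨?_, tc_restrict_sub _ _, fun x y h => h.1⟩,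
          ⟨?_, tc_restrict_sub _ _, fun x y h => h.1⟩⟩
  · have h : PrefUnion (Restrict r0 s) (Restrict r s) = Restrict (PrefUnion r0 r) s := by
      funext x y
      simp only [PrefUnion, Restrict, eq_iff_iff]; tauto
    rw [h]
  · have h : PrefPrior (Restrict r0 s) (Restrict r s) = Restrict (PrefPrior r0 r) s := by
      funext x y
      simp only [PrefPrior, Restrict, eq_iff_iff]; tauto
    rw [h]
  · have h : PrefPareto (Restrict r0 s) (Restrict r s) = Restrict (PrefPareto r0 r) s := by
      funext x y
      simp only [PrefPareto, Restrict, eq_iff_iff]; tauto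
    rw [h]
end

section
/- Let θ ∈ {∪, ▷, ⊗}, let ≻ and ≻₀ be preference relations, and let r be an instance. Define ≻₁ = TC(≻₀ θ ≻), ≻₂ = (≻₁)|_r, ≻₃ = TC((≻₀ θ ≻)|_r), and ≻₄ = TC((≻₀|_r) θ (≻|_r)). Then ω_{≻₁}(r) = ω_{≻₂}(r) ⊆ ω_{≻₃}(r) = ω_{≻₄}(r). -/
section Winnow

variable {α : Type*}

theorem winnow_restrict (q : α → α → Prop) (s : Set α) : Winnow (Restrict q s) s = Winnow q s := by
  ext t
  simp only [Winnow, Restrict, Set.mem_ofPred_eq]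
  exact and_congr_right fun hts =>
    not_congr ⟨fun ⟨t', ht's, hq, _⟩ => ⟨t', ht's, hq⟩, fun ⟨t', ht's, hq⟩ => ⟨t', ht's, hq, ht's, hts⟩⟩

theorem winnow_anti {p q : α → α → Prop} {s : Set α} (h : ∀ x ∈ s, ∀ y ∈ s, q x y → p x y) :
    Winnow p s ⊆ Winnow q s :=
  fun t ⟨hts, hmax⟩ => ⟨hts, fun ⟨t', ht's, hq⟩ => hmax ⟨t', ht's, h t' ht's t hts hq⟩⟩

theorem prefTC_restrict_le (q : α → α → Prop) (s : Set α) : PrefTC (Restrict q s) ≤ PrefTC q :=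
  Relation.TransGen.mono fun _ _ hxy => hxy.1

theorem restrict_prefUnion (r0 r : α → α → Prop) (s : Set α) :
    Restrict (PrefUnion r0 r) s = PrefUnion (Restrict r0 s) (Restrict r s) := by
  funext x y; simp only [Restrict, PrefUnion, eq_iff_iff]; tauto

theorem restrict_prefPrior (r0 r : α → α → Prop) (s : Set α) :
    Restrict (PrefPrior r0 r) s = PrefPrior (Restrict r0 s) (Restrict r s) := by
  funext x y; simp only [Restrict, PrefPrior, eq_iff_iff]; tauto

theorem restrict_prefPareto (r0 r : α → α → Prop) (s : Set α) :
    Restrict (PrefPareto r0 r) s = PrefPareto (Restrict r0 s) (Restrict r s) := by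
  funext x y; simp only [Restrict, PrefPareto, eq_iff_iff]; tauto

theorem winnow_prefTC_chain (θ : (α → α → Prop) → (α → α → Prop) → α → α → Prop)
    (r0 r : α → α → Prop) (s : Set α)
    (hθ : Restrict (θ r0 r) s = θ (Restrict r0 s) (Restrict r s)) :
    Winnow (PrefTC (θ r0 r)) s = Winnow (Restrict (PrefTC (θ r0 r)) s) s ∧
    Winnow (Restrict (PrefTC (θ r0 r)) s) s ⊆ Winnow (PrefTC (Restrict (θ r0 r) s)) s ∧
    Winnow (PrefTC (Restrict (θ r0 r) s)) s =
      Winnow (PrefTC (θ (Restrict r0 s) (Restrict r s))) s := by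
  refine ⟨(winnow_restrict _ s).symm, ?_, by rw [hθ]⟩
  rw [winnow_restrict]
  exact winnow_anti fun x _ y _ => prefTC_restrict_le _ s x y

end Winnow

/-- For each composition operator θ: with `≻₁ = PrefTC(r0 θ r)`, `≻₂ = (≻₁)|_s`,
`≻₃ = PrefTC((r0 θ r)|_s)`, `≻₄ = PrefTC((r0|_s) θ (r|_s))`, we have
`ω_{≻₁}(s) = ω_{≻₂}(s) ⊆ ω_{≻₃}(s) = ω_{≻₄}(s)`. -/
theorem stmt15 {α : Type*} (r r0 : α → α → Prop) (s : Set α) :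
    (Winnow (PrefTC (PrefUnion r0 r)) s = Winnow (Restrict (PrefTC (PrefUnion r0 r)) s) s ∧
     Winnow (Restrict (PrefTC (PrefUnion r0 r)) s) s ⊆ Winnow (PrefTC (Restrict (PrefUnion r0 r) s)) s ∧
     Winnow (PrefTC (Restrict (PrefUnion r0 r) s)) s =
       Winnow (PrefTC (PrefUnion (Restrict r0 s) (Restrict r s))) s) ∧
    (Winnow (PrefTC (PrefPrior r0 r)) s = Winnow (Restrict (PrefTC (PrefPrior r0 r)) s) s ∧
     Winnow (Restrict (PrefTC (PrefPrior r0 r)) s) s ⊆ Winnow (PrefTC (Restrict (PrefPrior r0 r) s)) s ∧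
     Winnow (PrefTC (Restrict (PrefPrior r0 r) s)) s =
       Winnow (PrefTC (PrefPrior (Restrict r0 s) (Restrict r s))) s) ∧
    (Winnow (PrefTC (PrefPareto r0 r)) s = Winnow (Restrict (PrefTC (PrefPareto r0 r)) s) s ∧
     Winnow (Restrict (PrefTC (PrefPareto r0 r)) s) s ⊆ Winnow (PrefTC (Restrict (PrefPareto r0 r) s)) s ∧
     Winnow (PrefTC (Restrict (PrefPareto r0 r) s)) s =
       Winnow (PrefTC (PrefPareto (Restrict r0 s) (Restrict r s))) s) := by
  exact ⟨winnow_prefTC_chain PrefUnion r0 r s (restrict_prefUnion r0 r s),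
    winnow_prefTC_chain PrefPrior r0 r s (restrict_prefPrior r0 r s),
    winnow_prefTC_chain PrefPareto r0 r s (restrict_prefPareto r0 r s)⟩
end

section
/- If X is an interval order (IO) preference relation, then P₁₁(X) and P₁₂(X) are interval order preference relations. -/
/-- The rule operator `P₁₁`. -/
def P11 {α : Type*} (X : α → α → Prop) : α → α → Prop :=
  fun x z => ∃ y, X x y ∧ ¬ X z y ∧ ¬ X y z

/-- The rule operator `P₁₂`. -/
def P12 {α : Type*} (X : α → α → Prop) : α → α → Prop :=
  fun x z => ∃ y, X y z ∧ ¬ X x y ∧ ¬ X y x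

/-- If `X` is an interval order, so are `P₁₁(X)` and `P₁₂(X)`. -/
theorem stmt18 {α : Type*} (X : α → α → Prop) (h : IsIO X) :
    IsIO (P11 X) ∧ IsIO (P12 X) := by
  obtain ⟨⟨hirr, htrans⟩, hio⟩ := h
  constructor
  · refine ⟨⟨?_, ?_⟩, ?_⟩
    · rintro x ⟨y, hxy, hnxy, _⟩; exact hnxy hxy
    · rintro x z w ⟨y1, hxy1, hzy1, hy1z⟩ ⟨y2, hzy2, hwy2, hy2w⟩
      exact ⟨y2, (hio x y1 z y2 hxy1 hzy2).resolve_right hzy1, hwy2, hy2w⟩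
    · rintro x y z w ⟨a, hxa, hya, hay⟩ ⟨b, hzb, hwb, hbw⟩
      rcases hio x a z b hxa hzb with h1 | h2
      · exact Or.inl ⟨b, h1, hwb, hbw⟩
      · exact Or.inr ⟨a, h2, hya, hay⟩
  · refine ⟨⟨?_, ?_⟩, ?_⟩
    · rintro x ⟨y, hyx, _, hnyx⟩; exact hnyx hyx
    · rintro x z w ⟨y1, hy1z, hxy1, hy1x⟩ ⟨y2, hy2w, hzy2, hy2z⟩
      exact ⟨y1, (hio y1 z y2 w hy1z hy2w).resolve_right hy2z, hxy1, hy1x⟩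
    · rintro x y z w ⟨a, hay, hxa, hax⟩ ⟨b, hbw, hzb, hbz⟩
      rcases hio a y b w hay hbw with h1 | h2
      · exact Or.inl ⟨a, h1, hxa, hax⟩
      · exact Or.inr ⟨b, h2, hzb, hbz⟩
end

section
/- Let Y be a strict partial order (SPO) preference relation and let F(Y) = P₁₂(P₁₁(Y)). Then F(Y) ⊆ Y if and only if Y is a weak order (WO). -/
/-- For an SPO `Y`, `P₁₂(P₁₁(Y)) ⊆ Y` iff `Y` is a weak order. -/
theorem stmt19 {α : Type*} (Y : α → α → Prop) (h : IsSPO Y) :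
    (∀ x y, P12 (P11 Y) x y → Y x y) ↔ IsWO Y := by
  obtain ⟨hirr, htrans⟩ := h
  constructor
  · -- F(Y) ⊆ Y implies negative transitivity
    intro hF
    refine ⟨⟨hirr, htrans⟩, ?_⟩
    intro x y z hxy hyz
    intro hxz
    -- then ¬ Y z y (else Y x y by transitivity)
    have hzy : ¬ Y z y := fun hzy => hxy (htrans x z y hxz hzy)
    -- P11 Y x y via witness z
    have hp : P11 Y x y := ⟨z, hxz, hyz, hzy⟩
    have hii : ¬ P11 Y x x := by
      rintro ⟨w, hw1, hw2, _⟩; exact hw2 hw1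
    exact hxy (hF x y ⟨x, hp, hii, hii⟩)
  · -- WO implies F(Y) ⊆ Y
    rintro ⟨_, hneg⟩ x z ⟨y, hyz, hxy, hyx⟩
    -- from P11 Y y z derive Y y z
    obtain ⟨w, hyw, hzw, hwz⟩ := hyz
    have hYyz : Y y z := by
      by_contra hn
      exact hneg y z w hn hzw hyw
    by_contra hxz
    -- ¬ P11 Y y x with witness z forces Y x z ∨ Y z x
    have hzx : Y z x := by
      by_contra hzx
      exact hyx ⟨z, hYyz, hxz, hzx⟩
    have hYyx : Y y x := htrans y z x hYyz hzx
    exact hyx ⟨x, hYyx, hirr x, hirr x⟩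
end
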